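/- arXiv:1410.7046 — 6 statements merged into one kernel-verified Lean document; each statement's English description precedes it below -/
import Mathlib

section
/- Let H be a prime tournament and let c > 0 and ε > 0. If every H-free tournament T satisfies tr(T) ≥ c·|T|^ε, then every H-free tournament T satisfies tr(T) ≥ |T|^ε. -/
open Finset

attribute [local instance] Classical.propDecidable

/-- A tournament on vertex set `Fin n`: for every pair of distinct vertices exactly one
direction is present, and no vertex is adjacent to itself. -/
structure Tournament where
  n : ℕ
  adj : Fin n → Fin n → Prop
  asymm : ∀ u v, adj u v → ¬ adj v u
  total : ∀ u v, u ≠ v → adj u v ∨ adj v u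

namespace Tournament

/-- `S` is a transitive set: the adjacency relation restricted to `S` is a strict linear
order (by the tournament axioms this is equivalent to transitivity on `S`). -/
def IsTransitiveSet (T : Tournament) (S : Finset (Fin T.n)) : Prop :=
  ∀ a ∈ S, ∀ b ∈ S, ∀ c ∈ S, T.adj a b → T.adj b c → T.adj a c

/-- `tr T`: the maximum size of a transitive subset of the vertices of `T`. -/
noncomputable def transNum (T : Tournament) : ℕ :=
  sSup {m | ∃ S : Finset (Fin T.n), T.IsTransitiveSet S ∧ S.card = m}

/-- `T` contains an induced copy of `H`. -/
def Contains (T H : Tournament) : Prop :=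
  ∃ f : Fin H.n → Fin T.n, Function.Injective f ∧
    ∀ u v : Fin H.n, H.adj u v ↔ T.adj (f u) (f v)

/-- `T` is `H`-free: no set of vertices of `T` induces a subtournament isomorphic to `H`. -/
def HFree (T H : Tournament) : Prop := ¬ T.Contains H

/-- `S` is a homogeneous set of `T`. -/
def IsHomogeneous (T : Tournament) (S : Finset (Fin T.n)) : Prop :=
  ∀ v, v ∉ S → (∀ s ∈ S, T.adj v s) ∨ (∀ s ∈ S, T.adj s v)

/-- A tournament is prime if it has no nontrivial homogeneous set. -/
def IsPrime (T : Tournament) : Prop :=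
  ¬ ∃ S : Finset (Fin T.n), T.IsHomogeneous S ∧ 1 < S.card ∧ S.card < T.n

/-- The backward-edge graph of `T` under the ordering `σ` (where `σ p` is the vertex in
position `p`): `u` and `v` are joined iff the tournament edge between them goes from the
later position to the earlier one. -/
def backAdj (T : Tournament) (σ : Equiv.Perm (Fin T.n)) (u v : Fin T.n) : Prop :=
  (σ.symm u < σ.symm v ∧ T.adj v u) ∨ (σ.symm v < σ.symm u ∧ T.adj u v)

/-- `σ` is a galaxy ordering of `T` with center assignment `ctr` (mapping each vertex to the
center of its star component, centers and singletons being fixed points): every backward edge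
joins a leaf to its center, each star is a left star or a right star, and no center of a star
lies between two leaves of another star. -/
def IsGalaxyOrdering (T : Tournament) (σ : Equiv.Perm (Fin T.n))
    (ctr : Fin T.n → Fin T.n) : Prop :=
  (∀ v, ctr (ctr v) = ctr v) ∧
  (∀ v, ctr v ≠ v → T.backAdj σ v (ctr v)) ∧
  (∀ u v, T.backAdj σ u v → (ctr u = u ∧ ctr v = u) ∨ (ctr v = v ∧ ctr u = v)) ∧
  (∀ c, ctr c = c →
    (∀ v, ctr v = c → v = c ∨ σ.symm v < σ.symm c) ∨
    (∀ v, ctr v = c → v = c ∨ σ.symm c < σ.symm v)) ∧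
  (∀ c, ctr c = c → (∃ v, v ≠ c ∧ ctr v = c) →
    ∀ l₁ l₂, l₁ ≠ ctr l₁ → l₂ ≠ ctr l₂ → ctr l₁ = ctr l₂ → ctr l₁ ≠ c →
      ¬ (σ.symm l₁ < σ.symm c ∧ σ.symm c < σ.symm l₂))

/-- A tournament is a galaxy if it admits a galaxy ordering. -/
def IsGalaxy (T : Tournament) : Prop := ∃ σ ctr, T.IsGalaxyOrdering σ ctr

/-- A tournament is a star: it has an ordering of its vertices under which the backward-edge
graph is connected and is a star `K_{1,t}` whose center comes before all its leaves or after
all its leaves. -/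
def IsStar (T : Tournament) : Prop :=
  ∃ (σ : Equiv.Perm (Fin T.n)) (c : Fin T.n),
    (∀ v, v ≠ c → T.backAdj σ c v) ∧
    (∀ u v, T.backAdj σ u v → u = c ∨ v = c) ∧
    ((∀ v, v ≠ c → σ.symm c < σ.symm v) ∨ (∀ v, v ≠ c → σ.symm v < σ.symm c))

/-- `P` is a partition of the vertex set of `T` into transitive sets. -/
def IsTransPartition (T : Tournament) (P : Finset (Finset (Fin T.n))) : Prop :=
  (∀ S ∈ P, T.IsTransitiveSet S) ∧ ∀ v : Fin T.n, ∃! S, S ∈ P ∧ v ∈ S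

/-- The chromatic number of `T`: the least number of parts in a partition of the vertices of
`T` into transitive sets. -/
noncomputable def chromaticNum (T : Tournament) : ℕ :=
  sInf {m | ∃ P : Finset (Finset (Fin T.n)), T.IsTransPartition P ∧ P.card = m}

/-- The directed density from `X` to `Y`. -/
noncomputable def density (T : Tournament) (X Y : Finset (Fin T.n)) : ℝ :=
  (((X ×ˢ Y).filter fun p => T.adj p.1 p.2).card : ℝ) / ((X.card : ℝ) * (Y.card : ℝ))

/-- Common part of the definitions of l-sequences and m-sequences: pairwise disjoint
nonempty sets with density at least `1 - lam` forwards. -/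
def SeqBase (T : Tournament) (lam : ℝ) (m : ℕ) (S : Fin m → Finset (Fin T.n)) : Prop :=
  (∀ i, (S i).Nonempty) ∧ (∀ i j, i ≠ j → Disjoint (S i) (S j)) ∧
  ∀ i j : Fin m, i < j → 1 - lam ≤ T.density (S i) (S j)

/-- A `(c, lam)`-l-sequence: every set is `c`-linear. -/
def IsLSeq (T : Tournament) (c lam : ℝ) (m : ℕ) (S : Fin m → Finset (Fin T.n)) : Prop :=
  T.SeqBase lam m S ∧ ∀ i, c * (T.n : ℝ) ≤ ((S i).card : ℝ)

/-- A `(c₁, c₂, lam, eps)`-m-sequence: sets in odd positions (even `0`-based indices) are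
`c₂`-linear, sets in even positions are transitive and `(c₁, eps)`-big. -/
def IsMSeq (T : Tournament) (c₁ c₂ lam eps : ℝ) (m : ℕ)
    (S : Fin m → Finset (Fin T.n)) : Prop :=
  T.SeqBase lam m S ∧
  (∀ i : Fin m, (i : ℕ) % 2 = 0 → c₂ * (T.n : ℝ) ≤ ((S i).card : ℝ)) ∧
  (∀ i : Fin m, (i : ℕ) % 2 = 1 →
    T.IsTransitiveSet (S i) ∧ c₁ * (T.n : ℝ) ^ eps ≤ ((S i).card : ℝ))

/-- A sequence of sets is smooth if the `1 - lam` density condition holds pointwise. -/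
def Smooth (T : Tournament) (lam : ℝ) (m : ℕ) (S : Fin m → Finset (Fin T.n)) : Prop :=
  ∀ i j : Fin m, i < j →
    (∀ v ∈ S i, 1 - lam ≤ T.density {v} (S j)) ∧
    (∀ v ∈ S j, 1 - lam ≤ T.density (S i) {v})

/-- `P` is a partition of the vertex set of `T` into homogeneous sets. -/
def IsHomogeneousPartition (T : Tournament) (P : Finset (Finset (Fin T.n))) : Prop :=
  (∀ A ∈ P, A.Nonempty ∧ T.IsHomogeneous A) ∧ ∀ v : Fin T.n, ∃! A, A ∈ P ∧ v ∈ A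

/-- `p T`: the least number of parts of a nontrivial homogeneous partition. -/
noncomputable def partNum (T : Tournament) : ℕ :=
  sInf {m | ∃ P : Finset (Finset (Fin T.n)),
    T.IsHomogeneousPartition P ∧ 1 < P.card ∧ P.card = m}

/-- `T` is `H`-far: for every nontrivial homogeneous partition `P` of the vertices of `H`,
`T` contains no subtournament isomorphic to the quotient tournament `H_P`. -/
def HFar (T H : Tournament) : Prop :=
  ∀ P : Finset (Finset (Fin H.n)), H.IsHomogeneousPartition P → 1 < P.card →
    ¬ ∃ g : {A // A ∈ P} → Fin T.n, Function.Injective g ∧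
        ∀ A B : {A // A ∈ P}, A ≠ B →
          ((∀ a ∈ A.1, ∀ b ∈ B.1, H.adj a b) ↔ T.adj (g A) (g B))

end Tournament

/-! Tensor-power trick. The lexicographic product `A[B]` of `H`-free tournaments is again
`H`-free when `H` is prime, while `tr(A[B]) ≤ tr(A) tr(B)`. Applied to the lexicographic powers
of `T`, the hypothesis gives `c (|T|^ε)^k ≤ tr(T)^k` for all `k ≥ 1`, and letting `k → ∞`
removes the constant `c`. -/

namespace Tournament

lemma adj_irrefl (T : Tournament) (v : Fin T.n) : ¬ T.adj v v :=
  fun h => T.asymm v v h h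

lemma bddAbove_transitiveSetCards (T : Tournament) :
    BddAbove {m | ∃ S : Finset (Fin T.n), T.IsTransitiveSet S ∧ S.card = m} :=
  ⟨T.n, by rintro m ⟨S, -, rfl⟩; simpa using S.card_le_univ⟩

lemma card_le_transNum {T : Tournament} {S : Finset (Fin T.n)} (hS : T.IsTransitiveSet S) :
    S.card ≤ T.transNum :=
  le_csSup T.bddAbove_transitiveSetCards ⟨S, hS, rfl⟩

lemma exists_isTransitiveSet_card_eq_transNum (T : Tournament) :
    ∃ S : Finset (Fin T.n), T.IsTransitiveSet S ∧ S.card = T.transNum :=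
  (Nat.sSup_mem · T.bddAbove_transitiveSetCards) ⟨0, ∅, by simp [IsTransitiveSet], rfl⟩

lemma IsTransitiveSet.mono {T : Tournament} {S S' : Finset (Fin T.n)} (hS : T.IsTransitiveSet S)
    (h : S' ⊆ S) : T.IsTransitiveSet S' :=
  fun a ha b hb c hc => hS a (h ha) b (h hb) c (h hc)

lemma IsTransitiveSet.image {T U : Tournament} {S : Finset (Fin T.n)} (hS : T.IsTransitiveSet S)
    {g : Fin T.n → Fin U.n} (hg : ∀ x ∈ S, ∀ y ∈ S, U.adj (g x) (g y) ↔ T.adj x y) :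
    U.IsTransitiveSet (S.image g) := by
  simp only [IsTransitiveSet, mem_image]
  rintro _ ⟨x, hx, rfl⟩ _ ⟨y, hy, rfl⟩ _ ⟨z, hz, rfl⟩ hxy hyz
  exact (hg x hx z hz).2 (hS x hx y hy z hz ((hg x hx y hy).1 hxy) ((hg y hy z hz).1 hyz))

lemma IsPrime.eq_univ_of_isHomogeneous {H : Tournament} (hH : H.IsPrime)
    {C : Finset (Fin H.n)} (hC : H.IsHomogeneous C) (hcard : 1 < C.card) : C = univ :=
  eq_univ_of_card C <| le_antisymm (by simpa using C.card_le_univ)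
    (by simpa using fun hlt => hH ⟨C, hC, hcard, hlt⟩)

/-- The lexicographic product `A[B]` (a copy of `B` substituted for each vertex of `A`);
its vertex `u` is the pair `finProdFinEquiv.symm u`. -/
def lexProd (A B : Tournament) : Tournament where
  n := A.n * B.n
  adj u v := Prod.Lex A.adj B.adj (finProdFinEquiv.symm u) (finProdFinEquiv.symm v)
  asymm u v := by
    simp only [Prod.lex_def]
    rintro (h | ⟨he, h⟩) (h' | ⟨he', h'⟩)
    · exact A.asymm _ _ h h'
    · exact A.adj_irrefl _ (he' ▸ h)
    · exact A.adj_irrefl _ (he ▸ h')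
    · exact B.asymm _ _ h h'
  total u v huv := by
    simp only [Prod.lex_def]
    by_cases he : (finProdFinEquiv.symm u).1 = (finProdFinEquiv.symm v).1
    · have h2 : (finProdFinEquiv.symm u).2 ≠ (finProdFinEquiv.symm v).2 :=
        fun h2 => huv (finProdFinEquiv.symm.injective (Prod.ext he h2))
      rcases B.total _ _ h2 with h | h
      exacts [Or.inl (Or.inr ⟨he, h⟩), Or.inr (Or.inr ⟨he.symm, h⟩)]
    · rcases A.total _ _ he with h | h
      exacts [Or.inl (Or.inl h), Or.inr (Or.inl h)]

section lexProd

variable {A B : Tournament} {p q : Fin A.n × Fin B.n}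

lemma lex_adj_iff_of_fst_ne (h : p.1 ≠ q.1) : Prod.Lex A.adj B.adj p q ↔ A.adj p.1 q.1 := by
  simp [Prod.lex_def, h]

lemma lex_adj_iff_of_fst_eq (h : p.1 = q.1) : Prod.Lex A.adj B.adj p q ↔ B.adj p.2 q.2 := by
  simp [Prod.lex_def, h, A.adj_irrefl]

lemma transNum_lexProd_le : (lexProd A B).transNum ≤ A.transNum * B.transNum := by
  obtain ⟨S, hS, hcard⟩ := (lexProd A B).exists_isTransitiveSet_card_eq_transNum
  set π := fun u : Fin (lexProd A B).n => (finProdFinEquiv.symm u).1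
  set τ := fun u : Fin (lexProd A B).n => (finProdFinEquiv.symm u).2
  have hfst : A.IsTransitiveSet (S.image π) := by
    simp only [IsTransitiveSet, mem_image]
    rintro _ ⟨x, hx, rfl⟩ _ ⟨y, hy, rfl⟩ _ ⟨z, hz, rfl⟩ hxy hyz
    have hxy' : π x ≠ π y := fun h => A.adj_irrefl _ (h ▸ hxy)
    have hyz' : π y ≠ π z := fun h => A.adj_irrefl _ (h ▸ hyz)
    have hxz' : π x ≠ π z := fun h => A.asymm _ _ hyz (h ▸ hxy)
    exact (lex_adj_iff_of_fst_ne hxz').1 <| hS x hx y hy z hz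
      ((lex_adj_iff_of_fst_ne hxy').2 hxy) ((lex_adj_iff_of_fst_ne hyz').2 hyz)
  have hfiber : ∀ a ∈ S.image π, (S.filter (π · = a)).card ≤ B.transNum := by
    intro a _
    have hπ : ∀ x ∈ S.filter (π · = a), π x = a := fun x hx => (mem_filter.1 hx).2
    have hinj : Set.InjOn τ (S.filter (π · = a)) := fun x hx y hy h =>
      finProdFinEquiv.symm.injective (Prod.ext ((hπ x hx).trans (hπ y hy).symm) h)
    rw [← card_image_of_injOn hinj]
    refine card_le_transNum ((hS.mono (filter_subset _ S)).image fun x hx y hy => ?_)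
    exact (lex_adj_iff_of_fst_eq ((hπ x hx).trans (hπ y hy).symm)).symm
  calc (lexProd A B).transNum = S.card := hcard.symm
    _ ≤ B.transNum * (S.image π).card := card_le_mul_card_image S _ hfiber
    _ ≤ A.transNum * B.transNum := by
      rw [mul_comm]; exact Nat.mul_le_mul_right _ (card_le_transNum hfst)

lemma isHomogeneous_filter_fst_eq {H : Tournament} {g : Fin H.n → Fin A.n × Fin B.n}
    (hg : ∀ u v, H.adj u v ↔ Prod.Lex A.adj B.adj (g u) (g v)) (a : Fin A.n) :
    H.IsHomogeneous (univ.filter fun w => (g w).1 = a) := by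
  intro w hw
  simp only [mem_filter, mem_univ, true_and] at hw ⊢
  rcases A.total _ _ hw with h | h
  · refine Or.inl fun s hs => ?_
    rw [hg, lex_adj_iff_of_fst_ne (by rwa [hs]), hs]
    exact h
  · refine Or.inr fun s hs => ?_
    rw [hg, lex_adj_iff_of_fst_ne (by rw [hs]; exact Ne.symm hw), hs]
    exact h

/-- A copy of a prime `H` in `A[B]` either meets every copy of `B` at most once, and then
projects to a copy in `A`, or lies within a single copy of `B`, since the vertices sharing a
first coordinate form a homogeneous set of `H`. -/
lemma HFree.lexProd {H : Tournament} (hH : H.IsPrime) (hA : A.HFree H) (hB : B.HFree H) :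
    (lexProd A B).HFree H := by
  rintro ⟨f, hf, hadj⟩
  set g := fun w => finProdFinEquiv.symm (f w)
  have hg : Function.Injective g := finProdFinEquiv.symm.injective.comp hf
  by_cases hfst : Function.Injective fun w => (g w).1
  · refine hA ⟨_, hfst, fun u v => ?_⟩
    rcases eq_or_ne u v with rfl | huv
    · exact iff_of_false (H.adj_irrefl u) (A.adj_irrefl _)
    · exact (hadj u v).trans (lex_adj_iff_of_fst_ne (hfst.ne huv))
  · obtain ⟨u, v, hfst_uv, huv⟩ := Function.not_injective_iff.1 hfst
    have hC := hH.eq_univ_of_isHomogeneous (isHomogeneous_filter_fst_eq hadj (g u).1)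
      (one_lt_card.2 ⟨u, mem_filter.2 ⟨mem_univ u, rfl⟩,
        v, mem_filter.2 ⟨mem_univ v, hfst_uv.symm⟩, huv⟩)
    have hall : ∀ x y, (g x).1 = (g y).1 := fun x y =>
      (mem_filter.1 (hC ▸ mem_univ x)).2.trans (mem_filter.1 (hC ▸ mem_univ y)).2.symm
    refine hB ⟨fun w => (g w).2, fun x y h => hg (Prod.ext (hall x y) h), fun x y => ?_⟩
    exact (hadj x y).trans (lex_adj_iff_of_fst_eq (hall x y))

end lexProd

/-- The lexicographic power `T^(k+1)`. -/
def lexPow (T : Tournament) : ℕ → Tournament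
  | 0 => T
  | k + 1 => lexProd (lexPow T k) T

lemma n_lexPow (T : Tournament) (k : ℕ) : (T.lexPow k).n = T.n ^ (k + 1) := by
  induction k with
  | zero => simp [lexPow]
  | succ k ih => exact (congrArg (· * T.n) ih).trans (pow_succ _ _).symm

lemma transNum_lexPow_le (T : Tournament) (k : ℕ) :
    (T.lexPow k).transNum ≤ T.transNum ^ (k + 1) := by
  induction k with
  | zero => simp [lexPow]
  | succ k ih => calc
      (T.lexPow (k + 1)).transNum ≤ (T.lexPow k).transNum * T.transNum := transNum_lexProd_le
      _ ≤ T.transNum ^ (k + 1) * T.transNum := Nat.mul_le_mul_right _ ih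
      _ = T.transNum ^ (k + 2) := (pow_succ _ _).symm

lemma HFree.lexPow {H T : Tournament} (hH : H.IsPrime) (hT : T.HFree H) (k : ℕ) :
    (T.lexPow k).HFree H := by
  induction k with
  | zero => exact hT
  | succ k ih => exact ih.lexProd hH hT

end Tournament

lemma le_of_forall_mul_pow_succ_le {c x t : ℝ} (hc : 0 < c) (ht : 0 ≤ t)
    (h : ∀ k : ℕ, c * x ^ (k + 1) ≤ t ^ (k + 1)) : x ≤ t := by
  by_contra! htx
  have hx : 0 < x := ht.trans_lt htx
  have hlim := (tendsto_pow_atTop_nhds_zero_of_lt_one (div_nonneg ht hx.le)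
    ((div_lt_one hx).2 htx)).comp (Filter.tendsto_add_atTop_nat 1)
  obtain ⟨k, hk⟩ := (hlim.eventually_lt_const hc).exists
  have hk_le := h k
  rw [Function.comp_apply, div_pow, div_lt_iff₀ (by positivity)] at hk
  linarith

open Tournament

theorem stmt4_general (H : Tournament) (hprime : H.IsPrime) (c eps : ℝ) (hc : 0 < c)
    (hyp : ∀ T : Tournament, T.HFree H → c * (T.n : ℝ) ^ eps ≤ (T.transNum : ℝ)) :
    ∀ T : Tournament, T.HFree H → (T.n : ℝ) ^ eps ≤ (T.transNum : ℝ) := by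
  intro T hT
  refine le_of_forall_mul_pow_succ_le hc (Nat.cast_nonneg _) fun k => ?_
  have hn : ((T.lexPow k).n : ℝ) ^ eps = ((T.n : ℝ) ^ eps) ^ (k + 1) := by
    rw [n_lexPow, Nat.cast_pow, ← Real.rpow_natCast_mul (Nat.cast_nonneg _), mul_comm,
      Real.rpow_mul_natCast (Nat.cast_nonneg _)]
  calc c * ((T.n : ℝ) ^ eps) ^ (k + 1) = c * ((T.lexPow k).n : ℝ) ^ eps := by rw [hn]
    _ ≤ (T.lexPow k).transNum := hyp _ (hT.lexPow hprime k)
    _ ≤ (T.transNum : ℝ) ^ (k + 1) := by exact_mod_cast transNum_lexPow_le T k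

/-- Let H be a prime tournament and c, ε > 0. If every H-free tournament T
satisfies tr(T) ≥ c·|T|^ε, then every H-free tournament T satisfies tr(T) ≥ |T|^ε. -/
theorem stmt4 (H : Tournament) (hprime : H.IsPrime) (c eps : ℝ) (hc : 0 < c) (he : 0 < eps)
    (hyp : ∀ T : Tournament, T.HFree H → c * (T.n : ℝ) ^ eps ≤ (T.transNum : ℝ)) :
    ∀ T : Tournament, T.HFree H → (T.n : ℝ) ^ eps ≤ (T.transNum : ℝ) :=
  stmt4_general H hprime c eps hc hyp
end

section
/- There exists a constant C > 0 such that for every ε ∈ (0,1] and every tournament T on n ≥ 2 vertices with the property that every nonempty subset S ⊆ V(T) contains a transitive subset of size at least |S|^ε, the vertex set V(T) can be partitioned into at most C · n^(1−ε) · log n transitive sets. -/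
open Finset

attribute [local instance] Classical.propDecidable

/-! Colour greedily: while `s` vertices remain, remove a transitive set of size `t ≥ s ^ ε`.
That colour is paid for by the `t` terms `k ^ (-ε) ≥ s ^ (-ε)`, `s - t < k ≤ s`, of
`∑_{k ≤ n} k ^ (-ε)`, and this sum is at most `n ^ (1 - ε) ∑_{k ≤ n} 1 / k ≤ n ^ (1 - ε) (1 + log n)`. -/

open Tournament

lemma one_le_sum_Ico_rpow_neg {ε : ℝ} (hε : 0 ≤ ε) {s t : ℕ} (hs : 0 < s) (hts : t ≤ s)
    (hst : (s : ℝ) ^ ε ≤ t) : 1 ≤ ∑ k ∈ Ico (s - t) s, ((k : ℝ) + 1) ^ (-ε) := by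
  have hsR : (0 : ℝ) < s := by exact_mod_cast hs
  have hterm : ∀ k ∈ Ico (s - t) s, (s : ℝ) ^ (-ε) ≤ ((k : ℝ) + 1) ^ (-ε) := by
    intro k hk
    have hks : (k : ℝ) + 1 ≤ s := by exact_mod_cast (mem_Ico.mp hk).2
    exact Real.rpow_le_rpow_of_nonpos (by positivity) hks (neg_nonpos.mpr hε)
  calc (1 : ℝ) = (s : ℝ) ^ ε * (s : ℝ) ^ (-ε) := by rw [← Real.rpow_add hsR]; simp
    _ ≤ t * (s : ℝ) ^ (-ε) := by gcongr
    _ = #(Ico (s - t) s) • (s : ℝ) ^ (-ε) := by rw [Nat.card_Ico, nsmul_eq_mul]; congr; omega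
    _ ≤ ∑ k ∈ Ico (s - t) s, ((k : ℝ) + 1) ^ (-ε) := card_nsmul_le_sum _ _ _ hterm

theorem exists_finpartition_card_le_sum_rpow_neg {α : Type*} [DecidableEq α]
    {Good : Finset α → Prop} {ε : ℝ} (hε : 0 ≤ ε)
    (h : ∀ S : Finset α, S.Nonempty → ∃ S' ⊆ S, Good S' ∧ (#S : ℝ) ^ ε ≤ #S')
    (S : Finset α) :
    ∃ P : Finpartition S, (∀ A ∈ P.parts, Good A) ∧
      (#P.parts : ℝ) ≤ ∑ k ∈ range #S, ((k : ℝ) + 1) ^ (-ε) := by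
  induction S using Finset.strongInduction with
  | H S ih =>
    rcases S.eq_empty_or_nonempty with rfl | hS
    · exact ⟨Finpartition.empty _, by simp, by simp⟩
    obtain ⟨S', hS'S, hgood, hcard⟩ := h S hS
    have hS' : S'.Nonempty := by
      rw [← Finset.card_pos, ← Nat.cast_pos (α := ℝ)]
      exact (Real.rpow_pos_of_pos (by exact_mod_cast hS.card_pos) ε).trans_le hcard
    obtain ⟨P, hPgood, hPcard⟩ := ih (S \ S') (sdiff_ssubset hS'S hS')
    refine ⟨P.extend hS'.ne_empty disjoint_sdiff_self_left (sdiff_union_of_subset hS'S),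
      ?_, ?_⟩
    · simp only [Finpartition.extend_parts, mem_insert, forall_eq_or_imp]
      exact ⟨hgood, hPgood⟩
    · rw [card_sdiff_of_subset hS'S] at hPcard
      rw [Finpartition.card_extend, ← sum_range_add_sum_Ico _ (Nat.sub_le #S #S')]
      push_cast
      linarith [one_le_sum_Ico_rpow_neg hε hS.card_pos (card_le_card hS'S) hcard]

lemma sum_range_rpow_neg_le {ε : ℝ} (hε : ε ≤ 1) (n : ℕ) :
    ∑ k ∈ range n, ((k : ℝ) + 1) ^ (-ε) ≤ (n : ℝ) ^ (1 - ε) * (1 + Real.log n) := by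
  have hharmonic : ∑ k ∈ range n, ((k : ℝ) + 1)⁻¹ ≤ 1 + Real.log n := by
    simpa [harmonic] using harmonic_le_one_add_log n
  calc ∑ k ∈ range n, ((k : ℝ) + 1) ^ (-ε)
      = ∑ k ∈ range n, ((k : ℝ) + 1) ^ (1 - ε) * ((k : ℝ) + 1)⁻¹ := by
        refine sum_congr rfl fun k _ => ?_
        rw [Real.rpow_sub (by positivity), Real.rpow_one, Real.rpow_neg (by positivity)]
        field_simp
    _ ≤ ∑ k ∈ range n, (n : ℝ) ^ (1 - ε) * ((k : ℝ) + 1)⁻¹ := by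
        gcongr with k hk
        exact_mod_cast mem_range.mp hk
    _ ≤ (n : ℝ) ^ (1 - ε) * (1 + Real.log n) := by
        rw [← mul_sum]; gcongr

theorem Tournament.isTransPartition_of_finpartition (T : Tournament)
    (P : Finpartition (univ : Finset (Fin T.n))) (hP : ∀ A ∈ P.parts, T.IsTransitiveSet A) :
    T.IsTransPartition P.parts :=
  ⟨hP, fun v => P.existsUnique_mem (mem_univ v)⟩

/-- There exists a constant C > 0 such that for every ε ∈ (0,1] and every
tournament T on n ≥ 2 vertices in which every nonempty subset S of vertices contains a
transitive subset of size at least |S|^ε, the vertex set of T can be partitioned into at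
most C · n^(1−ε) · log n transitive sets. -/
theorem stmt6 :
    ∃ C : ℝ, 0 < C ∧
      ∀ eps : ℝ, 0 < eps → eps ≤ 1 →
        ∀ T : Tournament, 2 ≤ T.n →
          (∀ S : Finset (Fin T.n), S.Nonempty →
            ∃ S' ⊆ S, T.IsTransitiveSet S' ∧ (S.card : ℝ) ^ eps ≤ (S'.card : ℝ)) →
          ∃ P : Finset (Finset (Fin T.n)), T.IsTransPartition P ∧
            (P.card : ℝ) ≤ C * (T.n : ℝ) ^ ((1 : ℝ) - eps) * Real.log (T.n : ℝ) := by
  refine ⟨3, by norm_num, fun eps heps heps1 T hn hT => ?_⟩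
  obtain ⟨P, hPtrans, hPcard⟩ := exists_finpartition_card_le_sum_rpow_neg heps.le hT univ
  refine ⟨P.parts, T.isTransPartition_of_finpartition P hPtrans, ?_⟩
  have hlog : 1 + Real.log T.n ≤ 3 * Real.log T.n := by
    have : Real.log 2 ≤ Real.log T.n := Real.log_le_log (by norm_num) (by exact_mod_cast hn)
    linarith [Real.log_two_gt_d9]
  calc (#P.parts : ℝ) ≤ ∑ k ∈ range T.n, ((k : ℝ) + 1) ^ (-eps) := by simpa using hPcard
    _ ≤ (T.n : ℝ) ^ (1 - eps) * (1 + Real.log T.n) := sum_range_rpow_neg_le heps1 T.n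
    _ ≤ (T.n : ℝ) ^ (1 - eps) * (3 * Real.log T.n) := by gcongr
    _ = 3 * (T.n : ℝ) ^ ((1 : ℝ) - eps) * Real.log T.n := by ring
end

section
/- Let t ≥ 1 and let T be a tournament on n vertices that contains a smooth (c,λ₀)-l-sequence of length 2t+1. Assume that every proper induced subtournament T|S (S ⊊ V(T)) satisfies tr(T|S) ≥ |S|^ε, where 0 < ε ≤ log(2)/log(2/c). Then T contains a smooth (1/4, c/2, λ, ε)-m-sequence of length 2t+1, where λ = 64·t²·(t+1)·λ₀. -/
open Finset

attribute [local instance] Classical.propDecidable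

open Tournament

/-!
Go through the odd positions `1, 3, …, 2t - 1` in turn. At position `2r + 1` the current set still
holds at least `3/4` of `S (2r + 1)`, so the hypothesis gives a transitive subset `B` of size at
least `(3/4 |S (2r + 1)|)^ε`; every later set then drops its vertices with more than `4tλ₀|B|`
out-neighbours in `B`. Each vertex of `B` has at most `λ₀|S j|` in-neighbours in `S j`, so double
counting bounds the loss by `|S j| / (4t)` per round. Afterwards every vertex has few
out-neighbours in each earlier set. A final Markov-type cleaning removes from each set the
vertices with too many in-neighbours in some later set, losing at most a quarter of it; this gives
the pointwise form of smoothness with `λ = (64/3) t (2t + 1) λ₀ ≤ 64 t² (t + 1) λ₀`. Finally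
`ε ≤ log 2 / log (2/c)` means `c^ε ≥ 1/2`, which turns `(3/4) (3/4 · c n)^ε` into at least
`n^ε / 4`.
-/

namespace Finset

variable {α β : Type*}

theorem card_filter_lt_card_bipartiteAbove_le (r : α → β → Prop) [∀ a b, Decidable (r a b)]
    {s : Finset α} {t : Finset β} {a θ C : ℝ} (hθ : 0 ≤ θ) (hC : 0 ≤ C)
    (ht : ∀ b ∈ t, (#(s.bipartiteBelow r b) : ℝ) ≤ a) (hle : #t * a ≤ θ * C) :
    (#{x ∈ s | θ < (#(t.bipartiteAbove r x) : ℝ)} : ℝ) ≤ C := by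
  set bad := {x ∈ s | θ < (#(t.bipartiteAbove r x) : ℝ)}
  rcases bad.eq_empty_or_nonempty with hbad | hbad
  · simpa [hbad] using hC
  have hbelow : ∀ b ∈ t, (#(bad.bipartiteBelow r b) : ℝ) ≤ a :=
    fun b hb => le_trans (by gcongr; apply filter_subset_filter; apply filter_subset) (ht b hb)
  have key := card_nsmul_lt_card_nsmul_of_lt_of_le r hbad (fun x hx => (mem_filter.1 hx).2) hbelow
  rw [nsmul_eq_mul, nsmul_eq_mul] at key
  nlinarith

theorem ne_univ_of_subset [Fintype α] {m : ℕ} {X : Fin m → Finset α}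
    (hne : ∀ i, (X i).Nonempty) (hdisj : ∀ i j, i ≠ j → Disjoint (X i) (X j)) (hm : 2 ≤ m)
    {A : Finset α} {j : Fin m} (hA : A ⊆ X j) : A ≠ univ := by
  have : Nontrivial (Fin m) := Fin.nontrivial_iff_two_le.2 hm
  obtain ⟨k, hk⟩ := exists_ne j
  obtain ⟨v, hv⟩ := hne k
  exact fun h => disjoint_left.1 (hdisj k j hk) hv (hA (h ▸ mem_univ v))

end Finset

namespace Tournament

variable (T : Tournament)

theorem card_filter_adj_add_card_filter_adj {v : Fin T.n} {Y : Finset (Fin T.n)} (hv : v ∉ Y) :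
    #{w ∈ Y | T.adj v w} + #{w ∈ Y | T.adj w v} = #Y := by
  have := card_filter_add_card_filter_not (s := Y) (p := fun w => T.adj v w)
  rw [← this]
  congr 2
  apply filter_congr
  intro w hw
  have hne : v ≠ w := by rintro rfl; exact hv hw
  exact ⟨fun h h' => T.asymm _ _ h' h, (T.total v w hne).resolve_left⟩

theorem density_eq_sum_left (X Y : Finset (Fin T.n)) :
    T.density X Y = (∑ x ∈ X, #{y ∈ Y | T.adj x y} : ℕ) / (#X * #Y) := by
  rw [density, card_filter, sum_product]
  simp only [card_filter]

theorem density_eq_sum_right (X Y : Finset (Fin T.n)) :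
    T.density X Y = (∑ y ∈ Y, #{x ∈ X | T.adj x y} : ℕ) / (#X * #Y) := by
  rw [density, card_filter, sum_product_right]
  simp only [card_filter]

theorem one_sub_le_density_singleton_left_iff {v : Fin T.n} {Y : Finset (Fin T.n)} (hv : v ∉ Y)
    (hY : Y.Nonempty) (lam : ℝ) :
    1 - lam ≤ T.density {v} Y ↔ (#{w ∈ Y | T.adj w v} : ℝ) ≤ lam * #Y := by
  have hsum : (#{w ∈ Y | T.adj v w} + #{w ∈ Y | T.adj w v} : ℝ) = #Y := by
    exact_mod_cast T.card_filter_adj_add_card_filter_adj hv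
  rw [density_eq_sum_left, sum_singleton, card_singleton, Nat.cast_one, one_mul,
    le_div_iff₀ (by exact_mod_cast hY.card_pos)]
  constructor <;> intro h <;> linarith

theorem one_sub_le_density_singleton_right_iff {w : Fin T.n} {X : Finset (Fin T.n)} (hw : w ∉ X)
    (hX : X.Nonempty) (lam : ℝ) :
    1 - lam ≤ T.density X {w} ↔ (#{u ∈ X | T.adj w u} : ℝ) ≤ lam * #X := by
  have hsum : (#{u ∈ X | T.adj w u} + #{u ∈ X | T.adj u w} : ℝ) = #X := by
    exact_mod_cast T.card_filter_adj_add_card_filter_adj hw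
  rw [density_eq_sum_right, sum_singleton, card_singleton, Nat.cast_one, mul_one,
    le_div_iff₀ (by exact_mod_cast hX.card_pos)]
  constructor <;> intro h <;> linarith

theorem one_sub_le_density_of_forall {X Y : Finset (Fin T.n)} (hXY : Disjoint X Y)
    (hX : X.Nonempty) (hY : Y.Nonempty) {lam : ℝ}
    (h : ∀ v ∈ X, (#{w ∈ Y | T.adj w v} : ℝ) ≤ lam * #Y) : 1 - lam ≤ T.density X Y := by
  have hsum : ∑ v ∈ X, #{w ∈ Y | T.adj v w} + ∑ v ∈ X, #{w ∈ Y | T.adj w v} = #X * #Y := by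
    rw [← sum_add_distrib, sum_congr rfl fun v hv =>
      T.card_filter_adj_add_card_filter_adj (disjoint_left.1 hXY hv), sum_const, smul_eq_mul]
  have hback : (∑ v ∈ X, #{w ∈ Y | T.adj w v} : ℝ) ≤ #X * (lam * #Y) := by
    simpa using sum_le_sum h
  have hXY : (0 : ℝ) < #X * #Y := by
    have := hX.card_pos; have := hY.card_pos; positivity
  rw [density_eq_sum_left, le_div_iff₀ hXY]
  have := congrArg (Nat.cast (R := ℝ)) hsum
  push_cast at this hback ⊢
  nlinarith

def IsBackSparse (lam : ℝ) (m : ℕ) (X : Fin m → Finset (Fin T.n)) : Prop :=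
  ∀ i j : Fin m, i < j →
    (∀ v ∈ X i, (#{w ∈ X j | T.adj w v} : ℝ) ≤ lam * #(X j)) ∧
    (∀ w ∈ X j, (#{u ∈ X i | T.adj w u} : ℝ) ≤ lam * #(X i))

variable {T} {m : ℕ} {X : Fin m → Finset (Fin T.n)} {lam : ℝ}

theorem smooth_iff_isBackSparse (hne : ∀ i, (X i).Nonempty)
    (hdisj : ∀ i j, i ≠ j → Disjoint (X i) (X j)) :
    T.Smooth lam m X ↔ T.IsBackSparse lam m X := by
  refine forall₂_congr fun i j => imp_congr_right fun hij => and_congr ?_ ?_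
  · refine forall₂_congr fun v hv => T.one_sub_le_density_singleton_left_iff ?_ (hne j) lam
    exact disjoint_left.1 (hdisj i j hij.ne) hv
  · refine forall₂_congr fun w hw => T.one_sub_le_density_singleton_right_iff ?_ (hne i) lam
    exact disjoint_right.1 (hdisj i j hij.ne) hw

theorem IsBackSparse.seqBase (h : T.IsBackSparse lam m X) (hne : ∀ i, (X i).Nonempty)
    (hdisj : ∀ i j, i ≠ j → Disjoint (X i) (X j)) : T.SeqBase lam m X :=
  ⟨hne, hdisj, fun i j hij =>
    T.one_sub_le_density_of_forall (hdisj i j hij.ne) (hne i) (hne j) (h i j hij).1⟩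

theorem IsBackSparse.mono (h : T.IsBackSparse lam m X) {lam' : ℝ} (hle : lam ≤ lam') :
    T.IsBackSparse lam' m X := fun i j hij =>
  ⟨fun v hv => (h i j hij).1 v hv |>.trans (by gcongr),
    fun w hw => (h i j hij).2 w hw |>.trans (by gcongr)⟩

theorem IsBackSparse.nonneg (h : T.IsBackSparse lam m X) (hne : ∀ i, (X i).Nonempty)
    {i j : Fin m} (hij : i < j) : 0 ≤ lam := by
  obtain ⟨v, hv⟩ := hne i
  have hj : (0 : ℝ) < #(X j) := by exact_mod_cast (hne j).card_pos
  exact nonneg_of_mul_nonneg_left ((Nat.cast_nonneg _).trans ((h i j hij).1 v hv)) hj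

theorem card_le_card_filter_forall_add {μ : ℝ} (hμ : 0 ≤ μ)
    (hout : ∀ i j : Fin m, i < j → ∀ w ∈ X j, (#{u ∈ X i | T.adj w u} : ℝ) ≤ μ * #(X i))
    (i : Fin m) :
    (#(X i) : ℝ) ≤
      #{v ∈ X i | ∀ j, i < j → (#{w ∈ X j | T.adj w v} : ℝ) ≤ 4 * m * μ * #(X j)} + #(X i) / 4 := by
  have hm : (0 : ℝ) < m := by exact_mod_cast i.pos
  set bad : Fin m → Finset (Fin T.n) :=
    fun j => {v ∈ X i | 4 * m * μ * #(X j) < (#{w ∈ X j | T.adj w v} : ℝ)}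
  have hbad : ∀ j, i < j → (#(bad j) : ℝ) ≤ #(X i) / (4 * m) := fun j hij =>
    card_filter_lt_card_bipartiteAbove_le (fun v w => T.adj w v) (by positivity) (by positivity)
      (hout i j hij) (le_of_eq (by field_simp))
  set later : Finset (Fin m) := {j | i < j}
  have hcover : X i ⊆ {v ∈ X i | ∀ j, i < j → (#{w ∈ X j | T.adj w v} : ℝ) ≤ 4 * m * μ * #(X j)} ∪
      later.biUnion bad := by
    intro v hv
    by_cases hgood : ∀ j, i < j → (#{w ∈ X j | T.adj w v} : ℝ) ≤ 4 * m * μ * #(X j)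
    · exact mem_union_left _ (mem_filter.2 ⟨hv, hgood⟩)
    · push Not at hgood
      obtain ⟨j, hij, hj⟩ := hgood
      exact mem_union_right _ (mem_biUnion.2 ⟨j, mem_filter.2 ⟨mem_univ _, hij⟩,
        mem_filter.2 ⟨hv, hj⟩⟩)
  have hsum : ∑ j ∈ later, (#(bad j) : ℝ) ≤ #(X i) / 4 := calc
    _ ≤ ∑ _j ∈ later, (#(X i) / (4 * m) : ℝ) := sum_le_sum fun j hj => hbad j (mem_filter.1 hj).2
    _ ≤ ∑ _j : Fin m, (#(X i) / (4 * m) : ℝ) :=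
      sum_le_sum_of_subset_of_nonneg (filter_subset _ _) fun _ _ _ => by positivity
    _ = #(X i) / 4 := by rw [sum_const, card_univ, Fintype.card_fin, nsmul_eq_mul]; field_simp
  have := (card_le_card hcover).trans ((card_union_le _ _).trans
    (add_le_add_right card_biUnion_le _))
  have := (Nat.cast_le (α := ℝ)).2 this
  push_cast at this
  linarith

theorem exists_isBackSparse_of_forall_card_filter_le {μ : ℝ} (hμ : 0 ≤ μ)
    (hout : ∀ i j : Fin m, i < j → ∀ w ∈ X j, (#{u ∈ X i | T.adj w u} : ℝ) ≤ μ * #(X i)) :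
    ∃ X' : Fin m → Finset (Fin T.n), (∀ i, X' i ⊆ X i) ∧
      (∀ i, (3 / 4 : ℝ) * #(X i) ≤ #(X' i)) ∧ T.IsBackSparse (16 / 3 * m * μ) m X' := by
  set X' : Fin m → Finset (Fin T.n) := fun i =>
    {v ∈ X i | ∀ j, i < j → (#{w ∈ X j | T.adj w v} : ℝ) ≤ 4 * m * μ * #(X j)}
  have hsub : ∀ i, X' i ⊆ X i := fun i => filter_subset _ _
  have hcard : ∀ i, (3 / 4 : ℝ) * #(X i) ≤ #(X' i) := fun i => by
    linarith [card_le_card_filter_forall_add hμ hout i]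
  refine ⟨X', hsub, hcard, fun i j hij => ⟨fun v hv => ?_, fun w hw => ?_⟩⟩
  · calc (#{w ∈ X' j | T.adj w v} : ℝ) ≤ #{w ∈ X j | T.adj w v} := by
          gcongr; exact hsub j
      _ ≤ 4 * m * μ * #(X j) := (mem_filter.1 hv).2 j hij
      _ ≤ 16 / 3 * m * μ * #(X' j) := by
          nlinarith [mul_le_mul_of_nonneg_left (hcard j) (by positivity : (0 : ℝ) ≤ m * μ)]
  · have hm : (1 : ℝ) ≤ m := by exact_mod_cast i.pos
    calc (#{u ∈ X' i | T.adj w u} : ℝ) ≤ #{u ∈ X i | T.adj w u} := by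
          gcongr; exact hsub i
      _ ≤ μ * #(X i) := hout i j hij w (hsub j hw)
      _ ≤ 16 / 3 * m * μ * #(X' i) := by
          nlinarith [mul_le_mul_of_nonneg_left (hcard i) hμ,
            mul_nonneg (mul_nonneg (sub_nonneg.2 hm) hμ) (Nat.cast_nonneg (α := ℝ) #(X' i))]

theorem IsBackSparse.card_le_card_filter_add (hS : T.IsBackSparse lam m X) (hlam : 0 ≤ lam)
    {κ : ℝ} (hκ : 0 < κ) {i j : Fin m} (hij : i < j) {B Y : Finset (Fin T.n)} (hB : B ⊆ X i)
    (hY : Y ⊆ X j) :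
    (#Y : ℝ) ≤ #{w ∈ Y | (#{u ∈ B | T.adj w u} : ℝ) ≤ κ * lam * #B} + #(X j) / κ := by
  have hbad : (#{w ∈ Y | κ * lam * #B < (#{u ∈ B | T.adj w u} : ℝ)} : ℝ) ≤ #(X j) / κ :=
    card_filter_lt_card_bipartiteAbove_le (fun w u => T.adj w u) (by positivity) (by positivity)
      (a := lam * #(X j)) (fun u hu => le_trans (by gcongr; exact filter_subset_filter _ hY)
        ((hS i j hij).1 u (hB hu))) (le_of_eq (by field_simp))
  have hsplit := card_filter_add_card_filter_not (s := Y)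
    (p := fun w => (#{u ∈ B | T.adj w u} : ℝ) ≤ κ * lam * #B)
  simp only [not_le] at hsplit
  rw [← hsplit]
  push_cast
  linarith

noncomputable def prunedUpdate {m : ℕ} (X : Fin m → Finset (Fin T.n)) (i : Fin m)
    (B : Finset (Fin T.n)) (θ : ℝ) : Fin m → Finset (Fin T.n) := fun j =>
  if j = i then B else if i < j then {w ∈ X j | (#{u ∈ B | T.adj w u} : ℝ) ≤ θ} else X j

section PrunedUpdate

variable {m : ℕ} {X : Fin m → Finset (Fin T.n)} {i j : Fin m} {B : Finset (Fin T.n)} {θ : ℝ}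

@[simp] theorem prunedUpdate_self : prunedUpdate X i B θ i = B := if_pos rfl

theorem prunedUpdate_of_lt (hj : j < i) : prunedUpdate X i B θ j = X j := by
  simp only [prunedUpdate, if_neg hj.ne, if_neg (lt_asymm hj)]

theorem prunedUpdate_of_gt (hj : i < j) :
    prunedUpdate X i B θ j = {w ∈ X j | (#{u ∈ B | T.adj w u} : ℝ) ≤ θ} := by
  simp only [prunedUpdate, if_neg hj.ne', if_pos hj]

theorem prunedUpdate_subset (hB : B ⊆ X i) (j : Fin m) : prunedUpdate X i B θ j ⊆ X j := by
  rcases lt_trichotomy j i with hj | rfl | hj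
  · rw [prunedUpdate_of_lt hj]
  · rwa [prunedUpdate_self]
  · rw [prunedUpdate_of_gt hj]; exact filter_subset _ _

end PrunedUpdate

section Selection

variable {t : ℕ} (S : Fin (2 * t + 1) → Finset (Fin T.n)) (lam₀ eps : ℝ)

/-- The invariant once the transitive sets at positions `1, 3, …, 2r - 1` have been chosen. -/
structure IsPartialSelection (r : ℕ) (X : Fin (2 * t + 1) → Finset (Fin T.n)) : Prop where
  subset : ∀ j, X j ⊆ S j
  transitive : ∀ j : Fin (2 * t + 1), (j : ℕ) % 2 = 1 → (j : ℕ) < 2 * r →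
    T.IsTransitiveSet (X j) ∧ ((3 / 4) * #(S j) : ℝ) ^ eps ≤ #(X j)
  card : ∀ j : Fin (2 * t + 1), ((j : ℕ) % 2 = 1 → 2 * r ≤ j) →
    (#(S j) : ℝ) ≤ #(X j) + r * #(S j) / (4 * t)
  few_out : ∀ i j : Fin (2 * t + 1), i < j → (i : ℕ) % 2 = 1 → (i : ℕ) < 2 * r →
    ∀ w ∈ X j, (#{u ∈ X i | T.adj w u} : ℝ) ≤ 4 * t * lam₀ * #(X i)

variable {S lam₀ eps}

theorem isPartialSelection_zero : T.IsPartialSelection S lam₀ eps 0 S where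
  subset _ := subset_rfl
  transitive _ _ h := by omega
  card _ _ := by simp
  few_out _ _ _ _ h := by omega

theorem IsPartialSelection.three_quarters_le_card {r : ℕ} {X : Fin (2 * t + 1) → Finset (Fin T.n)}
    (hX : T.IsPartialSelection S lam₀ eps r X) (hr : r ≤ t) {j : Fin (2 * t + 1)}
    (hj : (j : ℕ) % 2 = 1 → 2 * r ≤ j) : (3 / 4 : ℝ) * #(S j) ≤ #(X j) := by
  have := hX.card j hj
  have : (r : ℝ) * #(S j) / (4 * t) ≤ #(S j) / 4 := by
    rcases t.eq_zero_or_pos with rfl | ht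
    · simp only [CharP.cast_eq_zero, mul_zero, div_zero]; positivity
    · have : (r : ℝ) ≤ t := by exact_mod_cast hr
      rw [div_le_div_iff₀ (by positivity) (by norm_num)]
      nlinarith [Nat.cast_nonneg (α := ℝ) #(S j)]
  linarith

theorem IsPartialSelection.exists_succ {r : ℕ} {X : Fin (2 * t + 1) → Finset (Fin T.n)}
    (hX : T.IsPartialSelection S lam₀ eps r X) (hr : r < t) (hS : T.IsBackSparse lam₀ _ S)
    (hlam₀ : 0 ≤ lam₀) (heps : 0 ≤ eps)
    (hsub : ∀ j, ∀ A ⊆ S j, ∃ B ⊆ A, T.IsTransitiveSet B ∧ (#A : ℝ) ^ eps ≤ #B) :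
    ∃ X', T.IsPartialSelection S lam₀ eps (r + 1) X' := by
  have ht : (0 : ℝ) < t := by exact_mod_cast (r.zero_le.trans_lt hr)
  set i : Fin (2 * t + 1) := ⟨2 * r + 1, by omega⟩
  have hi : ∀ j : Fin (2 * t + 1), j ≠ i → (j : ℕ) ≠ 2 * r + 1 := fun j hj h => hj (Fin.ext h)
  obtain ⟨B, hBX, hBtr, hBcard⟩ := hsub i (X i) (hX.subset i)
  refine ⟨prunedUpdate X i B (4 * t * lam₀ * #B),
    ⟨fun j => (prunedUpdate_subset hBX j).trans (hX.subset j), ?_, ?_, ?_⟩⟩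
  · intro j hodd hj
    rcases eq_or_ne j i with rfl | hji
    · have := hX.three_quarters_le_card hr.le (j := i) fun _ => by simp [i]
      rw [prunedUpdate_self]
      exact ⟨hBtr, (Real.rpow_le_rpow (by positivity) this heps).trans hBcard⟩
    · have := hi j hji
      rw [prunedUpdate_of_lt (Fin.lt_def.2 (show (j : ℕ) < 2 * r + 1 by omega))]
      exact hX.transitive j hodd (by omega)
  · intro j hj
    have hcard := hX.card j fun h => (hj h).trans' (by omega)
    have hsplit : ((r : ℝ) + 1) * #(S j) / (4 * t) = r * #(S j) / (4 * t) + #(S j) / (4 * t) := by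
      ring
    push_cast
    rcases lt_or_ge i j with hij | hji
    · have := hS.card_le_card_filter_add hlam₀ (by positivity : (0 : ℝ) < 4 * t) hij
        (hBX.trans (hX.subset i)) (hX.subset j) (Y := X j)
      rw [← prunedUpdate_of_gt hij] at this
      linarith
    · have hji : j < i := lt_of_le_of_ne hji fun h => by
        subst h; have := hj (by simp [i]); simp only [i] at this; omega
      rw [prunedUpdate_of_lt hji]
      have : (0 : ℝ) ≤ #(S j) / (4 * t) := by positivity
      linarith
  · intro i' j hij hodd hi' w hw
    rcases eq_or_ne i' i with rfl | hi'i
    · rw [prunedUpdate_of_gt hij] at hw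
      rw [prunedUpdate_self]
      exact (mem_filter.1 hw).2
    · have := hi i' hi'i
      rw [prunedUpdate_of_lt (Fin.lt_def.2 (show (i' : ℕ) < 2 * r + 1 by omega))]
      exact hX.few_out i' j hij hodd (by omega) w (prunedUpdate_subset hBX j hw)

theorem exists_isPartialSelection (hS : T.IsBackSparse lam₀ _ S) (hlam₀ : 0 ≤ lam₀)
    (heps : 0 ≤ eps)
    (hsub : ∀ j, ∀ A ⊆ S j, ∃ B ⊆ A, T.IsTransitiveSet B ∧ (#A : ℝ) ^ eps ≤ #B) :
    ∀ r ≤ t, ∃ X, T.IsPartialSelection S lam₀ eps r X := by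
  intro r
  induction r with
  | zero => exact fun _ => ⟨S, isPartialSelection_zero⟩
  | succ r ih =>
    intro hr
    obtain ⟨X, hX⟩ := ih (by omega)
    exact hX.exists_succ (by omega) hS hlam₀ heps hsub

theorem IsPartialSelection.card_filter_adj_le {X : Fin (2 * t + 1) → Finset (Fin T.n)}
    (hX : T.IsPartialSelection S lam₀ eps t X) (hS : T.IsBackSparse lam₀ _ S)
    (hlam₀ : 0 ≤ lam₀) (i j : Fin (2 * t + 1)) (hij : i < j) (w : Fin T.n) (hw : w ∈ X j) :
    (#{u ∈ X i | T.adj w u} : ℝ) ≤ 4 * t * lam₀ * #(X i) := by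
  rcases Nat.mod_two_eq_zero_or_one i with hi | hi
  · have ht : (1 : ℝ) ≤ t := by exact_mod_cast (show 1 ≤ t by omega)
    calc (#{u ∈ X i | T.adj w u} : ℝ) ≤ #{u ∈ S i | T.adj w u} := by
          gcongr; exact hX.subset i
      _ ≤ lam₀ * #(S i) := (hS i j hij).2 w (hX.subset j hw)
      _ ≤ 4 * t * lam₀ * #(X i) := by
          have := hX.three_quarters_le_card le_rfl (j := i) (by omega)
          nlinarith [mul_le_mul_of_nonneg_left this hlam₀,
            mul_nonneg (mul_nonneg (sub_nonneg.2 ht) hlam₀) (Nat.cast_nonneg (α := ℝ) #(X i))]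
  · exact hX.few_out i j hij hi (by omega) w hw

end Selection

theorem IsLSeq.le_one {c lam : ℝ} {m : ℕ} {S : Fin m → Finset (Fin T.n)} (h : T.IsLSeq c lam m S)
    (i : Fin m) : c ≤ 1 := by
  have hn : (0 : ℝ) < T.n := by exact_mod_cast (h.1.1 i).choose.pos
  have := (h.2 i).trans (Nat.cast_le.2 (card_le_univ (S i)))
  rw [Fintype.card_fin] at this
  nlinarith

theorem exists_isBackSparse_selection {t : ℕ} {S : Fin (2 * t + 1) → Finset (Fin T.n)}
    {lam₀ eps : ℝ} (hS : T.IsBackSparse lam₀ _ S) (hne : ∀ i, (S i).Nonempty) (hlam₀ : 0 ≤ lam₀)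
    (heps : 0 ≤ eps)
    (hsub : ∀ j, ∀ A ⊆ S j, ∃ B ⊆ A, T.IsTransitiveSet B ∧ (#A : ℝ) ^ eps ≤ #B) :
    ∃ X : Fin (2 * t + 1) → Finset (Fin T.n), (∀ i, X i ⊆ S i) ∧ (∀ i, (X i).Nonempty) ∧
      (∀ i : Fin (2 * t + 1), (i : ℕ) % 2 = 0 → (9 / 16 : ℝ) * #(S i) ≤ #(X i)) ∧
      (∀ i : Fin (2 * t + 1), (i : ℕ) % 2 = 1 →
        T.IsTransitiveSet (X i) ∧ (3 / 4) * ((3 / 4) * #(S i) : ℝ) ^ eps ≤ #(X i)) ∧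
      T.IsBackSparse (64 / 3 * t * (2 * t + 1) * lam₀) _ X := by
  obtain ⟨Y, hY⟩ := exists_isPartialSelection hS hlam₀ heps hsub t le_rfl
  obtain ⟨X, hXY, hcard, hX⟩ := exists_isBackSparse_of_forall_card_filter_le (by positivity)
    (hY.card_filter_adj_le hS hlam₀)
  have heven : ∀ i : Fin (2 * t + 1), (i : ℕ) % 2 = 0 → (9 / 16 : ℝ) * #(S i) ≤ #(X i) :=
    fun i hi => by linarith [hcard i, hY.three_quarters_le_card le_rfl (j := i) (by omega)]
  have hodd : ∀ i : Fin (2 * t + 1), (i : ℕ) % 2 = 1 →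
      T.IsTransitiveSet (X i) ∧ (3 / 4) * ((3 / 4) * #(S i) : ℝ) ^ eps ≤ #(X i) := fun i hi => by
    obtain ⟨htr, hbig⟩ := hY.transitive i hi (by omega)
    exact ⟨fun a ha b hb c hc => htr a (hXY i ha) b (hXY i hb) c (hXY i hc),
      by linarith [hcard i]⟩
  refine ⟨X, fun i => (hXY i).trans (hY.subset i), fun i => ?_, heven, hodd,
    hX.mono (le_of_eq (by push_cast; ring))⟩
  have hSi : (0 : ℝ) < #(S i) := by exact_mod_cast (hne i).card_pos
  rw [← card_pos, ← Nat.cast_pos (α := ℝ)]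
  rcases Nat.mod_two_eq_zero_or_one i with hi | hi
  · exact (heven i hi).trans_lt' (by positivity)
  · exact (hodd i hi).2.trans_lt' (by positivity)

end Tournament

theorem Real.one_half_le_rpow_of_le_log_div_log {c eps : ℝ} (hc : 0 < c) (hc₁ : c ≤ 1)
    (heps : 0 ≤ eps) (heps₂ : eps ≤ Real.log 2 / Real.log (2 / c)) : 1 / 2 ≤ c ^ eps := by
  have hlogc : Real.log (2 / c) = Real.log 2 - Real.log c :=
    Real.log_div two_ne_zero hc.ne'
  have hc0 : Real.log c ≤ 0 := Real.log_nonpos hc.le hc₁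
  have hlog2 : 0 < Real.log 2 := Real.log_pos one_lt_two
  have key : eps * Real.log (2 / c) ≤ Real.log 2 := (le_div_iff₀ (by linarith)).1 heps₂
  rw [Real.rpow_def_of_pos hc, one_div, ← Real.exp_log (two_pos (α := ℝ)), ← Real.exp_neg]
  exact Real.exp_le_exp.2 (by nlinarith)

theorem Real.quarter_mul_rpow_le {c eps x : ℝ} (hc : 0 < c) (hc₁ : c ≤ 1) (heps : 0 ≤ eps)
    (heps₂ : eps ≤ Real.log 2 / Real.log (2 / c)) (hx : 0 ≤ x) :
    1 / 4 * x ^ eps ≤ 3 / 4 * (3 / 4 * (c * x)) ^ eps := by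
  have hlog : Real.log 2 ≤ Real.log (2 / c) :=
    Real.log_le_log two_pos (by rw [le_div_iff₀ hc]; linarith)
  have heps₁ : eps ≤ 1 :=
    heps₂.trans <| (div_le_one₀ (hlog.trans_lt' (Real.log_pos one_lt_two))).2 hlog
  have h34 : (3 / 4 : ℝ) ≤ (3 / 4) ^ eps :=
    Real.self_le_rpow_of_le_one (by norm_num) (by norm_num) heps₁
  rw [Real.mul_rpow (by norm_num) (by positivity), Real.mul_rpow hc.le hx]
  have := Real.one_half_le_rpow_of_le_log_div_log hc hc₁ heps heps₂
  have : 0 ≤ x ^ eps := by positivity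
  nlinarith [mul_le_mul h34 this (by norm_num) (by positivity)]

/-- Let t ≥ 1 and let T contain a smooth (c,λ₀)-l-sequence of length 2t+1.
If every proper induced subtournament T|S satisfies tr(T|S) ≥ |S|^ε, where
0 < ε ≤ log 2 / log(2/c), then T contains a smooth (1/4, c/2, λ, ε)-m-sequence of length
2t+1, where λ = 64·t²·(t+1)·λ₀. -/
theorem stmt9 (T : Tournament) (t : ℕ) (ht : 1 ≤ t) (c lam₀ eps : ℝ) (hc : 0 < c)
    (S : Fin (2 * t + 1) → Finset (Fin T.n))
    (hl : T.IsLSeq c lam₀ (2 * t + 1) S) (hsm : T.Smooth lam₀ (2 * t + 1) S)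
    (heps₁ : 0 < eps) (heps₂ : eps ≤ Real.log 2 / Real.log (2 / c))
    (hsub : ∀ A : Finset (Fin T.n), A ≠ Finset.univ →
      ∃ B ⊆ A, T.IsTransitiveSet B ∧ (A.card : ℝ) ^ eps ≤ (B.card : ℝ)) :
    ∃ S' : Fin (2 * t + 1) → Finset (Fin T.n),
      T.IsMSeq (1 / 4) (c / 2) (64 * (t : ℝ) ^ 2 * ((t : ℝ) + 1) * lam₀) eps
        (2 * t + 1) S' ∧
      T.Smooth (64 * (t : ℝ) ^ 2 * ((t : ℝ) + 1) * lam₀) (2 * t + 1) S' := by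
  have hc₁ : c ≤ 1 := hl.le_one 0
  obtain ⟨⟨hne, hdisj, -⟩, hlin⟩ := hl
  have hS := (smooth_iff_isBackSparse hne hdisj).1 hsm
  have hlam₀ : 0 ≤ lam₀ := hS.nonneg hne (i := 0) (j := ⟨1, by omega⟩) (Fin.mk_lt_mk.2 one_pos)
  obtain ⟨X, hXS, hXne, heven, hodd, hX⟩ := exists_isBackSparse_selection hS hne hlam₀ heps₁.le
    fun j A hA => hsub A (ne_univ_of_subset hne hdisj (by omega) hA)
  have hXdisj : ∀ i j, i ≠ j → Disjoint (X i) (X j) := fun i j hij =>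
    (hdisj i j hij).mono (hXS i) (hXS j)
  have hlam : 64 / 3 * t * (2 * t + 1) * lam₀ ≤ 64 * (t : ℝ) ^ 2 * ((t : ℝ) + 1) * lam₀ := by
    have htR : (1 : ℝ) ≤ t := by exact_mod_cast ht
    gcongr ?_ * _
    nlinarith
  replace hX := hX.mono hlam
  refine ⟨X, ⟨hX.seqBase hXne hXdisj, fun i hi => ?_, fun i hi => ⟨(hodd i hi).1, ?_⟩⟩,
    (smooth_iff_isBackSparse hXne hXdisj).2 hX⟩
  · nlinarith [hlin i, heven i hi]
  · calc 1 / 4 * (T.n : ℝ) ^ eps ≤ 3 / 4 * (3 / 4 * (c * T.n)) ^ eps :=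
          Real.quarter_mul_rpow_le hc hc₁ heps₁.le heps₂ (Nat.cast_nonneg _)
      _ ≤ 3 / 4 * (3 / 4 * #(S i)) ^ eps := by gcongr; exact hlin i
      _ ≤ #(X i) := (hodd i hi).2
end

section
/- Let H be a tournament and let {W_1,…,W_a} and {L_1,…,L_b} be two partitions of V(H) into homogeneous sets. Then there do not exist indices k₁ ≠ k₂ and s₁ ≠ s₂ such that all four intersections W_{k₁} ∩ L_{s₁}, W_{k₁} ∩ L_{s₂}, W_{k₂} ∩ L_{s₁}, W_{k₂} ∩ L_{s₂} are nonempty. -/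
open Finset

attribute [local instance] Classical.propDecidable

open Tournament

namespace Tournament

variable {T : Tournament} {S A B C D : Finset (Fin T.n)} {u v w x y z : Fin T.n}

theorem IsHomogeneous.adj_right (hS : T.IsHomogeneous S) (hv : v ∉ S) (hu : u ∈ S)
    (hw : w ∈ S) (h : T.adj v u) : T.adj v w := by
  rcases hS v hv with hto | hfrom
  · exact hto w hw
  · exact absurd h (T.asymm _ _ (hfrom u hu))

theorem IsHomogeneous.adj_left (hS : T.IsHomogeneous S) (hv : v ∉ S) (hu : u ∈ S)
    (hw : w ∈ S) (h : T.adj u v) : T.adj w v := by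
  rcases hS v hv with hto | hfrom
  · exact absurd h (T.asymm _ _ (hto u hu))
  · exact hfrom w hw

/- Homogeneity of `B`, `A`, `D`, `C` in turn transports the edge `x → w` around the
square `x, z, y, w` until it forces both `w → z` and `z → w`. -/
theorem false_of_adj_of_mem_crossing (hA : T.IsHomogeneous A) (hB : T.IsHomogeneous B)
    (hC : T.IsHomogeneous C) (hD : T.IsHomogeneous D)
    (hAB : Disjoint A B) (hCD : Disjoint C D)
    (hx : x ∈ A ∩ C) (hy : y ∈ A ∩ D) (hz : z ∈ B ∩ C) (hw : w ∈ B ∩ D)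
    (hxw : T.adj x w) : False := by
  rw [mem_inter] at hx hy hz hw
  have hxz : T.adj x z := hB.adj_right (disjoint_left.mp hAB hx.1) hw.1 hz.1 hxw
  have hyz : T.adj y z := hA.adj_left (disjoint_right.mp hAB hz.1) hx.1 hy.1 hxz
  have hwz : T.adj w z := hD.adj_left (disjoint_left.mp hCD hz.2) hy.2 hw.2 hyz
  have hzw : T.adj z w := hC.adj_left (disjoint_right.mp hCD hw.2) hx.2 hz.2 hxw
  exact T.asymm _ _ hwz hzw

theorem not_crossing_of_isHomogeneous (hA : T.IsHomogeneous A) (hB : T.IsHomogeneous B)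
    (hC : T.IsHomogeneous C) (hD : T.IsHomogeneous D)
    (hAB : Disjoint A B) (hCD : Disjoint C D) :
    ¬ ((A ∩ C).Nonempty ∧ (A ∩ D).Nonempty ∧ (B ∩ C).Nonempty ∧ (B ∩ D).Nonempty) := by
  rintro ⟨⟨x, hx⟩, ⟨y, hy⟩, ⟨z, hz⟩, ⟨w, hw⟩⟩
  have hne : x ≠ w := fun h => disjoint_left.mp hAB (mem_inter.mp hx).1 (h ▸ (mem_inter.mp hw).1)
  rcases T.total x w hne with hxw | hwx
  · exact false_of_adj_of_mem_crossing hA hB hC hD hAB hCD hx hy hz hw hxw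
  · exact false_of_adj_of_mem_crossing hB hA hD hC hAB.symm hCD.symm hw hz hy hx hwx

end Tournament

theorem stmt16_general (H : Tournament) (a b : ℕ)
    (W : Fin a → Finset (Fin H.n)) (L : Fin b → Finset (Fin H.n))
    (hWhom : ∀ i, H.IsHomogeneous (W i))
    (hWdis : ∀ i j, i ≠ j → Disjoint (W i) (W j))
    (hLhom : ∀ i, H.IsHomogeneous (L i))
    (hLdis : ∀ i j, i ≠ j → Disjoint (L i) (L j)) :
    ¬ ∃ (k₁ k₂ : Fin a) (s₁ s₂ : Fin b), k₁ ≠ k₂ ∧ s₁ ≠ s₂ ∧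
      (W k₁ ∩ L s₁).Nonempty ∧ (W k₁ ∩ L s₂).Nonempty ∧
      (W k₂ ∩ L s₁).Nonempty ∧ (W k₂ ∩ L s₂).Nonempty := by
  rintro ⟨k₁, k₂, s₁, s₂, hk, hs, hcross⟩
  exact not_crossing_of_isHomogeneous (hWhom k₁) (hWhom k₂) (hLhom s₁) (hLhom s₂)
    (hWdis k₁ k₂ hk) (hLdis s₁ s₂ hs) hcross

/-- Let H be a tournament and {W_1,…,W_a}, {L_1,…,L_b} two partitions of V(H)
into homogeneous sets. Then there are no indices k₁ ≠ k₂ and s₁ ≠ s₂ such that all four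
intersections W_{k₁} ∩ L_{s₁}, W_{k₁} ∩ L_{s₂}, W_{k₂} ∩ L_{s₁}, W_{k₂} ∩ L_{s₂} are
nonempty. -/
theorem stmt16 (H : Tournament) (a b : ℕ)
    (W : Fin a → Finset (Fin H.n)) (L : Fin b → Finset (Fin H.n))
    (hWhom : ∀ i, H.IsHomogeneous (W i)) (hWne : ∀ i, (W i).Nonempty)
    (hWdis : ∀ i j, i ≠ j → Disjoint (W i) (W j)) (hWcov : ∀ v, ∃ i, v ∈ W i)
    (hLhom : ∀ i, H.IsHomogeneous (L i)) (hLne : ∀ i, (L i).Nonempty)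
    (hLdis : ∀ i j, i ≠ j → Disjoint (L i) (L j)) (hLcov : ∀ v, ∃ i, v ∈ L i) :
    ¬ ∃ (k₁ k₂ : Fin a) (s₁ s₂ : Fin b), k₁ ≠ k₂ ∧ s₁ ≠ s₂ ∧
      (W k₁ ∩ L s₁).Nonempty ∧ (W k₁ ∩ L s₂).Nonempty ∧
      (W k₂ ∩ L s₁).Nonempty ∧ (W k₂ ∩ L s₂).Nonempty :=
  stmt16_general H a b W L hWhom hWdis hLhom hLdis
end

section
/- For every integer i ≥ 1 and every ε₂ ∈ (0,1), the number of tournaments on the fixed labelled vertex set {1,…,i} that contain a homogeneous set S with i^(ε₂) ≤ |S| ≤ i/2 is at most 2^(i(i−1)/2) · 2^(3i/2 − i^(1+ε₂)/2). -/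
open Finset

attribute [local instance] Classical.propDecidable

open Tournament

/-
For a fixed set `S` of size `s`, a tournament in which `S` is homogeneous is determined by its
edges inside `S`, its edges inside the complement, and one bit per outside vertex (whether it
beats `S` or is beaten by it). This gives at most `2 ^ (C(s,2) + C(n-s,2) + (n-s))` tournaments,
and `C(s,2) + C(n-s,2) = C(n,2) - s(n-s)`. For `n^ε ≤ s ≤ n/2` we have
`s(n-s) - (n-s) = (n-s)(s-1) ≥ (n/2)(n^ε-1)`, and a union bound over the at most `2^n`
choices of `S` finishes the count.
-/

variable {α : Type*}

def IsTournamentMatrix (f : α → α → Bool) : Prop :=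
  (∀ u v, f u v = true → f v u = false) ∧ (∀ u v, u ≠ v → f u v = true ∨ f v u = true)

def IsHomogeneousSet (f : α → α → Bool) (S : Finset α) : Prop :=
  ∀ v, v ∉ S → (∀ s ∈ S, f v s = true) ∨ (∀ s ∈ S, f s v = true)

namespace IsTournamentMatrix

variable {f g : α → α → Bool}

theorem apply_self (hf : IsTournamentMatrix f) (u : α) : f u u = false := by
  cases h : f u u
  · rfl
  · simpa [h] using hf.1 u u h

theorem apply_swap (hf : IsTournamentMatrix f) {u v : α} (huv : u ≠ v) : f v u = !f u v := by
  cases h : f u v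
  · simpa [h] using hf.2 u v huv
  · simpa using hf.1 u v h

theorem ext_of_lt [LinearOrder α] (hf : IsTournamentMatrix f) (hg : IsTournamentMatrix g)
    (h : ∀ u v, u < v → f u v = g u v) : f = g := by
  funext u v
  rcases lt_trichotomy u v with huv | rfl | hvu
  · exact h u v huv
  · rw [hf.apply_self, hg.apply_self]
  · rw [hf.apply_swap hvu.ne, hg.apply_swap hvu.ne, h v u hvu]

theorem apply_eq_decide (hf : IsTournamentMatrix f) {S : Finset α} (hS : IsHomogeneousSet f S)
    {v s : α} (hv : v ∉ S) (hs : s ∈ S) : f v s = decide (∀ t ∈ S, f v t = true) := by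
  by_cases hall : ∀ t ∈ S, f v t = true
  · rw [hall s hs, decide_eq_true hall]
  · rcases hS v hv with h | h
    · exact absurd h hall
    · simpa [hall] using hf.1 s v (h s hs)

end IsTournamentMatrix

open Fintype

theorem choose_two_add_choose_two_add_le {n s x : ℝ} (hx : 1 ≤ x) (hxs : x ≤ s)
    (hsn : s ≤ n / 2) :
    s * (s - 1) / 2 + (n - s) * (n - s - 1) / 2 + (n - s) ≤
      n * (n - 1) / 2 + n / 2 - n * x / 2 := by
  have key : n / 2 * (x - 1) ≤ (n - s) * (s - 1) :=
    mul_le_mul (by linarith) (by linarith) (by linarith) (by linarith)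
  linear_combination key

section Counting

variable [Fintype α] [LinearOrder α]

noncomputable def homogeneousTournaments (S : Finset α) : Finset (α → α → Bool) :=
  {f | IsTournamentMatrix f ∧ IsHomogeneousSet f S}

theorem card_isHomogeneousSet_le (S : Finset α) :
    #(homogeneousTournaments S) ≤
      2 ^ (#S).choose 2 * 2 ^ (#Sᶜ).choose 2 * 2 ^ #Sᶜ := by
  have pairs (T : Finset α) : #{x ∈ T ×ˢ T | x.1 < x.2} = (#T).choose 2 := by
    convert T.card_product_filter_lt
  let code (f : α → α → Bool) : ({x ∈ S ×ˢ S | x.1 < x.2} → Bool) ×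
      ({x ∈ Sᶜ ×ˢ Sᶜ | x.1 < x.2} → Bool) × ((Sᶜ : Finset α) → Bool) :=
    (fun x => f x.1.1 x.1.2, fun x => f x.1.1 x.1.2, fun v => decide (∀ t ∈ S, f v t = true))
  calc #(homogeneousTournaments S)
      ≤ #(univ : Finset (({x ∈ S ×ˢ S | x.1 < x.2} → Bool) ×
          ({x ∈ Sᶜ ×ˢ Sᶜ | x.1 < x.2} → Bool) × ((Sᶜ : Finset α) → Bool))) := by
        refine card_le_card_of_injOn code (fun _ _ => mem_coe.2 (mem_univ _)) ?_
        intro f hf g hg hfg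
        simp only [homogeneousTournaments, coe_filter, mem_univ, true_and, Set.mem_ofPred_eq]
          at hf hg
        obtain ⟨hf, hfS⟩ := hf
        obtain ⟨hg, hgS⟩ := hg
        simp only [code, Prod.mk.injEq, funext_iff, Subtype.forall, mem_filter, mem_product,
          mem_compl] at hfg
        obtain ⟨hin, hout, hcross⟩ := hfg
        have cross : ∀ v ∉ S, ∀ s ∈ S, f v s = g v s := fun v hv s hs => by
          rw [hf.apply_eq_decide hfS hv hs, hg.apply_eq_decide hgS hv hs, decide_eq_decide]
          exact decide_eq_decide.1 (hcross v hv)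
        refine hf.ext_of_lt hg fun u v huv => ?_
        by_cases hu : u ∈ S <;> by_cases hv : v ∈ S
        · exact hin (u, v) ⟨⟨hu, hv⟩, huv⟩
        · rw [hf.apply_swap huv.ne', hg.apply_swap huv.ne', cross v hv u hu]
        · exact cross u hu v hv
        · exact hout (u, v) ⟨⟨hu, hv⟩, huv⟩
    _ = 2 ^ (#S).choose 2 * 2 ^ (#Sᶜ).choose 2 * 2 ^ #Sᶜ := by
        simp only [card_univ, Fintype.card_prod, Fintype.card_fun, Fintype.card_coe,
          Fintype.card_bool, mul_assoc]
        rw [pairs S, pairs Sᶜ]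

theorem card_isHomogeneousSet_le_rpow {S : Finset α} {x : ℝ} (hx : 1 ≤ x) (hxS : x ≤ #S)
    (hSn : (#S : ℝ) ≤ card α / 2) :
    (#(homogeneousTournaments S) : ℝ) ≤
      2 ^ (((card α).choose 2 : ℕ) + (card α : ℝ) / 2 - card α * x / 2) := by
  have hcompl : (#Sᶜ : ℝ) = card α - #S := by
    rw [card_compl, Nat.cast_sub (card_le_univ S)]
  calc (#(homogeneousTournaments S) : ℝ)
      ≤ ((2 ^ (#S).choose 2 * 2 ^ (#Sᶜ).choose 2 * 2 ^ #Sᶜ : ℕ) : ℝ) := by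
        exact_mod_cast card_isHomogeneousSet_le S
    _ = 2 ^ (((#S).choose 2 : ℕ) + ((#Sᶜ).choose 2 : ℕ) + (#Sᶜ : ℝ)) := by
        simp only [Real.rpow_add two_pos, Real.rpow_natCast, Nat.cast_mul, Nat.cast_pow,
          Nat.cast_ofNat]
    _ ≤ 2 ^ (((card α).choose 2 : ℕ) + (card α : ℝ) / 2 - card α * x / 2) := by
        apply Real.rpow_le_rpow_of_exponent_le one_le_two
        simp only [Nat.cast_choose_two, hcompl]
        exact choose_two_add_choose_two_add_le hx hxS hSn

theorem card_exists_isHomogeneousSet_le (hα : 1 ≤ card α)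
    {eps : ℝ} (heps : 0 ≤ eps) :
    (#{f : α → α → Bool | IsTournamentMatrix f ∧ ∃ S : Finset α, IsHomogeneousSet f S ∧
        (card α : ℝ) ^ eps ≤ #S ∧ (#S : ℝ) ≤ card α / 2} : ℝ) ≤
      2 ^ (card α).choose 2 * 2 ^ (3 * (card α : ℝ) / 2 - (card α : ℝ) ^ (1 + eps) / 2) := by
  set n := card α
  have hn : (1 : ℝ) ≤ n := by exact_mod_cast hα
  have hx : 1 ≤ (n : ℝ) ^ eps := Real.one_le_rpow hn heps
  let good : Finset (Finset α) := {S | (n : ℝ) ^ eps ≤ #S ∧ (#S : ℝ) ≤ n / 2}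
  have hunion : ({f : α → α → Bool | IsTournamentMatrix f ∧ ∃ S : Finset α,
      IsHomogeneousSet f S ∧ (n : ℝ) ^ eps ≤ #S ∧ (#S : ℝ) ≤ n / 2} : Finset _) ⊆
      good.biUnion fun S => homogeneousTournaments S := by
    intro f hf
    simp only [homogeneousTournaments, mem_filter, mem_univ, true_and, mem_biUnion, good]
      at hf ⊢
    obtain ⟨hf, S, hS, hsize⟩ := hf
    exact ⟨S, hsize, hf, hS⟩
  have hgood : (#good : ℝ) ≤ 2 ^ n := by
    exact_mod_cast (card_filter_le _ _).trans (by simp [n, Fintype.card_finset])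
  calc _ ≤ ∑ S ∈ good, (#(homogeneousTournaments S) : ℝ) := by
        exact_mod_cast (card_le_card hunion).trans card_biUnion_le
    _ ≤ ∑ S ∈ good, (2 : ℝ) ^ ((n.choose 2 : ℕ) + (n : ℝ) / 2 - n * n ^ eps / 2) := by
        refine sum_le_sum fun S hS => ?_
        obtain ⟨hxS, hSn⟩ := (mem_filter.1 hS).2
        exact card_isHomogeneousSet_le_rpow hx hxS hSn
    _ ≤ 2 ^ n * 2 ^ ((n.choose 2 : ℕ) + (n : ℝ) / 2 - n * n ^ eps / 2) := by
        rw [sum_const, nsmul_eq_mul]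
        gcongr
    _ = 2 ^ n.choose 2 * 2 ^ (3 * (n : ℝ) / 2 - (n : ℝ) ^ (1 + eps) / 2) := by
        rw [Real.rpow_add (by linarith), Real.rpow_one, ← Real.rpow_natCast,
          ← Real.rpow_natCast, ← Real.rpow_add two_pos, ← Real.rpow_add two_pos]
        ring_nf

end Counting

theorem stmt18_general (i : ℕ) (hi : 1 ≤ i) (eps : ℝ) (heps₁ : 0 < eps) :
    ((((Finset.univ : Finset (Fin i → Fin i → Bool))).filter (fun f =>
        (∀ u v : Fin i, f u v = true → f v u = false) ∧
        (∀ u v : Fin i, u ≠ v → f u v = true ∨ f v u = true) ∧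
        ∃ S : Finset (Fin i),
          (∀ v, v ∉ S → (∀ s ∈ S, f v s = true) ∨ (∀ s ∈ S, f s v = true)) ∧
          (i : ℝ) ^ eps ≤ (S.card : ℝ) ∧ (S.card : ℝ) ≤ (i : ℝ) / 2)).card : ℝ) ≤
      (2 : ℝ) ^ (i * (i - 1) / 2) *
        (2 : ℝ) ^ (3 * (i : ℝ) / 2 - (i : ℝ) ^ ((1 : ℝ) + eps) / 2) := by
  have h := card_exists_isHomogeneousSet_le (α := Fin i) (by simpa using hi) heps₁.le
  rw [Fintype.card_fin, Nat.choose_two_right] at h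
  convert h using 4
  · simp only [IsTournamentMatrix, IsHomogeneousSet, and_assoc]
  · congr 1; exact Subsingleton.elim _ _

/-- For every integer i ≥ 1 and every ε₂ ∈ (0,1), the number of tournaments on
the fixed labelled vertex set {1,…,i} containing a homogeneous set S with
i^(ε₂) ≤ |S| ≤ i/2 is at most 2^(i(i−1)/2) · 2^(3i/2 − i^(1+ε₂)/2). -/
theorem stmt18 (i : ℕ) (hi : 1 ≤ i) (eps : ℝ) (heps₁ : 0 < eps) (heps₂ : eps < 1) :
    ((((Finset.univ : Finset (Fin i → Fin i → Bool))).filter (fun f =>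
        (∀ u v : Fin i, f u v = true → f v u = false) ∧
        (∀ u v : Fin i, u ≠ v → f u v = true ∨ f v u = true) ∧
        ∃ S : Finset (Fin i),
          (∀ v, v ∉ S → (∀ s ∈ S, f v s = true) ∨ (∀ s ∈ S, f s v = true)) ∧
          (i : ℝ) ^ eps ≤ (S.card : ℝ) ∧ (S.card : ℝ) ≤ (i : ℝ) / 2)).card : ℝ) ≤
      (2 : ℝ) ^ (i * (i - 1) / 2) *
        (2 : ℝ) ^ (3 * (i : ℝ) / 2 - (i : ℝ) ^ ((1 : ℝ) + eps) / 2) :=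
  stmt18_general i hi eps heps₁
end

section
/- Let t ≥ 1 be an integer and let M be a real number with M > t. Let G be an undirected graph whose vertex set is the disjoint union of nonempty finite sets A_1,…,A_t, and suppose that for all i ≠ j, every vertex v ∈ A_i has at least (1 − 1/M)·|A_j| neighbors in A_j. Then there exist vertices v_1 ∈ A_1, …, v_t ∈ A_t that are pairwise adjacent in G. -/
open Finset

attribute [local instance] Classical.propDecidable

open Tournament
/-! Choose the vertices greedily, one part at a time. Each vertex already chosen misses at most a
`1/M` fraction of every other part, so by the union bound the `k` vertices chosen so far have at
least `(1 - k/M)|A_j|` common neighbours in any part `A_j` not yet used, and this is positive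
because `k < t < M`. -/

theorem Finset.card_filter_forall_ge {α ι : Type*} (B : Finset α) (S : Finset ι)
    (p : ι → α → Prop) [∀ i, DecidablePred (p i)] (δ : ℝ)
    (h : ∀ i ∈ S, (1 - δ) * #B ≤ #(B.filter (p i))) :
    (1 - #S * δ) * #B ≤ #(B.filter fun a => ∀ i ∈ S, p i a) := by
  classical
  have hmiss (i : ι) (hi : i ∈ S) : (#(B.filter fun a => ¬ p i a) : ℝ) ≤ δ * #B := by
    have hsplit : (#(B.filter (p i)) : ℝ) + #(B.filter fun a => ¬ p i a) = #B := by
      exact_mod_cast card_filter_add_card_filter_not (s := B) (p i)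
    linarith [h i hi]
  have hunion : B.filter (fun a => ¬ ∀ i ∈ S, p i a) =
      S.biUnion fun i => B.filter fun a => ¬ p i a := by
    ext a
    simp only [mem_filter, mem_biUnion, not_forall, exists_prop]
    tauto
  have hbad : (#(B.filter fun a => ¬ ∀ i ∈ S, p i a) : ℝ) ≤ #S * (δ * #B) :=
    calc (#(B.filter fun a => ¬ ∀ i ∈ S, p i a) : ℝ)
        ≤ ∑ i ∈ S, (#(B.filter fun a => ¬ p i a) : ℝ) := by
          rw [hunion]; exact_mod_cast card_biUnion_le
      _ ≤ ∑ i ∈ S, δ * #B := sum_le_sum hmiss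
      _ = #S * (δ * #B) := by rw [sum_const, nsmul_eq_mul]
  have hsplit : (#(B.filter fun a => ∀ i ∈ S, p i a) : ℝ) +
      #(B.filter fun a => ¬ ∀ i ∈ S, p i a) = #B := by
    exact_mod_cast card_filter_add_card_filter_not (s := B) (fun a => ∀ i ∈ S, p i a)
  linarith

namespace SimpleGraph

variable {V ι : Type*} (G : SimpleGraph V) [DecidableRel G.Adj]

theorem exists_mem_forall_adj (B : Finset V) (hB : B.Nonempty) (S : Finset ι) (v : ι → V)
    (δ : ℝ) (hδ : #S * δ < 1) (hdeg : ∀ i ∈ S, (1 - δ) * #B ≤ #(B.filter (G.Adj (v i)))) :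
    ∃ w ∈ B, ∀ i ∈ S, G.Adj (v i) w := by
  have hpos : 0 < (1 - #S * δ) * #B := mul_pos (by linarith) (by exact_mod_cast hB.card_pos)
  obtain ⟨w, hw⟩ := card_pos.mp <| Nat.cast_pos.mp <|
    hpos.trans_le (B.card_filter_forall_ge S (fun i => G.Adj (v i)) δ hdeg)
  exact ⟨w, (mem_filter.mp hw).1, (mem_filter.mp hw).2⟩

theorem exists_clique_transversal [Fintype ι] (A : ι → Finset V) (hne : ∀ i, (A i).Nonempty)
    (δ : ℝ) (hδ : (Fintype.card ι - 1) * δ < 1)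
    (hdeg : ∀ i j, i ≠ j → ∀ v ∈ A i, (1 - δ) * #(A j) ≤ #((A j).filter (G.Adj v))) :
    ∃ v : ι → V, (∀ i, v i ∈ A i) ∧ ∀ i j, i ≠ j → G.Adj (v i) (v j) := by
  classical
  suffices ∀ I : Finset ι, ∃ v : ι → V, (∀ i, v i ∈ A i) ∧
      ∀ i ∈ I, ∀ j ∈ I, i ≠ j → G.Adj (v i) (v j) by
    obtain ⟨v, hvA, hadj⟩ := this univ
    exact ⟨v, hvA, fun i j => hadj i (mem_univ i) j (mem_univ j)⟩
  intro I
  induction I using Finset.induction_on with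
  | empty => exact ⟨fun i => (hne i).choose, fun i => (hne i).choose_spec, by simp⟩
  | insert j I hj ih =>
    obtain ⟨v, hvA, hadj⟩ := ih
    have hne_j {i : ι} (hi : i ∈ I) : i ≠ j := ne_of_mem_of_not_mem hi hj
    have hI : (#I : ℝ) * δ < 1 := by
      have hcard : (#I : ℝ) + 1 ≤ Fintype.card ι := by exact_mod_cast card_lt_univ_of_notMem hj
      rcases le_or_gt 0 δ with h | h <;> nlinarith
    obtain ⟨w, hwA, hw⟩ := G.exists_mem_forall_adj (A j) (hne j) I v δ hI
      fun i hi => hdeg i j (hne_j hi) (v i) (hvA i)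
    refine ⟨Function.update v j w, fun i => ?_, ?_⟩
    · rcases eq_or_ne i j with rfl | hij
      · simpa
      · simpa [hij] using hvA i
    · intro i hi k hk hik
      rcases mem_insert.mp hi with rfl | hiI <;> rcases mem_insert.mp hk with rfl | hkI
      · exact (hik rfl).elim
      · simpa [hne_j hkI] using (hw k hkI).symm
      · simpa [hne_j hiI] using hw i hiI
      · simpa [hne_j hiI, hne_j hkI] using hadj i hiI k hkI hik

end SimpleGraph

theorem stmt19_general (V : Type*) (G : SimpleGraph V)
    (t : ℕ) (M : ℝ) (hM : (t : ℝ) < M)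
    (A : Fin t → Finset V) (hne : ∀ i, (A i).Nonempty)
    (hdeg : ∀ i j, i ≠ j → ∀ v ∈ A i,
      (1 - 1 / M) * ((A j).card : ℝ) ≤ (((A j).filter (G.Adj v)).card : ℝ)) :
    ∃ v : Fin t → V, (∀ i, v i ∈ A i) ∧ ∀ i j, i ≠ j → G.Adj (v i) (v j) := by
  have hM0 : 0 < M := (Nat.cast_nonneg t).trans_lt hM
  refine G.exists_clique_transversal A hne (1 / M) ?_ hdeg
  rw [Fintype.card_fin, ← mul_div_assoc, mul_one, div_lt_one hM0]
  linarith

/-- Let t ≥ 1 be an integer and M > t a real number. Let G be an undirected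
graph whose vertex set is the disjoint union of nonempty finite sets A_1,…,A_t, and suppose
that for all i ≠ j every vertex v ∈ A_i has at least (1 − 1/M)·|A_j| neighbors in A_j. Then
there exist pairwise adjacent vertices v_1 ∈ A_1, …, v_t ∈ A_t. -/
theorem stmt19 (V : Type*) [Fintype V] [DecidableEq V] (G : SimpleGraph V)
    (t : ℕ) (ht : 1 ≤ t) (M : ℝ) (hM : (t : ℝ) < M)
    (A : Fin t → Finset V) (hne : ∀ i, (A i).Nonempty)
    (hdis : ∀ i j, i ≠ j → Disjoint (A i) (A j))
    (hcov : ∀ v : V, ∃ i, v ∈ A i)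
    (hdeg : ∀ i j, i ≠ j → ∀ v ∈ A i,
      (1 - 1 / M) * ((A j).card : ℝ) ≤ (((A j).filter (G.Adj v)).card : ℝ)) :
    ∃ v : Fin t → V, (∀ i, v i ∈ A i) ∧ ∀ i j, i ≠ j → G.Adj (v i) (v j) :=
  stmt19_general V G t M hM A hne hdeg
end
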